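/- Let K be a finite field of order q and s an invertible exponent. For any t₁, t₂ ∈ K^×, Σ_{u∈K^×} W_{t₁u} W_{t₂u} equals q² if t₁ = t₂ and 0 otherwise, where W_u is the Weil sum Σ_{x∈K} ψ(x^s − ux). -/

import Mathlib

/-!
Expanding the product and summing over all `u ∈ K`, orthogonality of the primitive character `ψ`
gives `∑ᵤ W(t₁u) W(t₂u) = q · ∑_{t₁x + t₂y = 0} ψ(x ^ s + y ^ s)`. On the line
`y = -(t₁ / t₂) x` the injectivity of `x ↦ x ^ s` (which also forces `(-a) ^ s = -a ^ s`) turns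
this into `q · ∑ₓ ψ(x · (1 - (t₁ / t₂) ^ s))`, which is `q²` if `t₁ = t₂` and `0` otherwise.
The term `u = 0` contributes nothing, since `W 0 = ∑ₓ ψ(x ^ s) = ∑ₓ ψ x = 0`.
-/

open Finset

theorem pow_left_injective_of_coprime_card_units {G₀ : Type*} [GroupWithZero G₀] {s : ℕ}
    (hs : s ≠ 0) (h : (Nat.card G₀ˣ).Coprime s) : Function.Injective (· ^ s : G₀ → G₀) := by
  intro x y hxy
  simp only at hxy
  by_cases hx : x = 0
  · rw [hx, zero_pow hs, eq_comm, pow_eq_zero_iff hs] at hxy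
    rw [hx, hxy]
  have hy : y ≠ 0 := fun hy ↦ hx <| (pow_eq_zero_iff hs).1 <| by rw [hxy, hy, zero_pow hs]
  have := h.pow_left_bijective.injective (a₁ := Units.mk0 x hx) (a₂ := Units.mk0 y hy)
    (Units.ext <| by simpa using hxy)
  simpa using congrArg Units.val this

theorem neg_pow_of_pow_left_injective {R : Type*} [Ring R] [NoZeroDivisors R] {s : ℕ}
    (h : Function.Injective (· ^ s : R → R)) (a : R) : (-a) ^ s = -a ^ s := by
  have h_sq : (-1 : R) ^ s * (-1) ^ s = 1 := by
    rw [← pow_add, ← two_mul, pow_mul, neg_one_sq, one_pow]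
  have h_neg_one : (-1 : R) ^ s = -1 := by
    rcases mul_self_eq_one_iff.1 h_sq with h1 | h1
    · have : (-1 : R) = 1 := h (by simp only [h1, one_pow])
      rw [h1, this]
    · exact h1
  rw [neg_pow, h_neg_one, neg_one_mul]

theorem Fintype.sum_units_eq_sum_sub {G₀ M : Type*} [GroupWithZero G₀] [Fintype G₀]
    [DecidableEq G₀] [AddCommGroup M] (f : G₀ → M) :
    ∑ u : G₀ˣ, f u = ∑ a, f a - f 0 := by
  rw [← sum_erase_add (univ : Finset G₀) f (mem_univ 0), add_sub_cancel_right]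
  refine sum_bij' (fun u _ ↦ (u : G₀)) (fun a ha ↦ Units.mk0 a (ne_of_mem_erase ha)) ?_ ?_ ?_ ?_ ?_
    <;> simp

theorem AddChar.isPrimitive_zmodChar_compAddMonoidHom_trace {p : ℕ} [Fact p.Prime]
    {F C : Type*} [Field F] [Finite F] [Algebra (ZMod p) F] [CommRing C] {ζ : C}
    (hζ : IsPrimitiveRoot ζ p) :
    ((zmodChar p hζ.pow_eq_one).compAddMonoidHom
      (Algebra.trace (ZMod p) F).toAddMonoidHom).IsPrimitive := by
  refine IsPrimitive.of_ne_one <| ne_one_iff.2 ?_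
  obtain ⟨a, ha⟩ := Algebra.trace_surjective (ZMod p) F (1 : ZMod p)
  refine ⟨a, fun h ↦ one_ne_zero (α := ZMod p) ?_⟩
  rw [← ha]
  exact ((zmodChar_primitive_of_primitive_root p hζ).zmod_char_eq_one_iff p _).1 h

theorem AddChar.IsPrimitive.ne_one {K R : Type*} [Field K] [CommRing R]
    {ψ : AddChar K R} (hψ : ψ.IsPrimitive) : ψ ≠ 1 := by
  simpa only [mulShift_one] using hψ one_ne_zero

section WeilSum

variable {K R : Type*} [Field K] [Fintype K] [CommRing R] {ψ : AddChar K R} {s : ℕ}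

def weilSum (ψ : AddChar K R) (s : ℕ) (u : K) : R := ∑ x, ψ (x ^ s - u * x)

theorem AddChar.sum_pow_mul_eq_sum_mul (hs : Function.Injective (· ^ s : K → K)) (b : K) :
    ∑ x, ψ (x ^ s * b) = ∑ x, ψ (x * b) :=
  Fintype.sum_bijective _ (Finite.injective_iff_bijective.1 hs) _ _ fun _ ↦ rfl

variable [IsDomain R]

theorem weilSum_zero (hψ : ψ ≠ 1) (hs : Function.Injective (· ^ s : K → K)) :
    weilSum ψ s 0 = 0 := by
  simp only [weilSum, zero_mul, sub_zero]
  rw [Fintype.sum_bijective _ (Finite.injective_iff_bijective.1 hs) _ ψ fun _ ↦ rfl]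
  exact AddChar.sum_eq_zero_of_ne_one hψ

variable [DecidableEq K]

theorem sum_weilSum_mul_weilSum (hψ : ψ.IsPrimitive) (t₁ t₂ : K) :
    ∑ u, weilSum ψ s (t₁ * u) * weilSum ψ s (t₂ * u) =
      Fintype.card K * ∑ x, ∑ y, if t₁ * x + t₂ * y = 0 then ψ (x ^ s + y ^ s) else 0 := by
  have h_prod : ∀ u, weilSum ψ s (t₁ * u) * weilSum ψ s (t₂ * u) =
      ∑ x, ∑ y, ψ (x ^ s + y ^ s) * ψ (u * -(t₁ * x + t₂ * y)) := fun u ↦ by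
    rw [weilSum, weilSum, sum_mul_sum]
    refine sum_congr rfl fun x _ ↦ sum_congr rfl fun y _ ↦ ?_
    rw [← AddChar.map_add_eq_mul, ← AddChar.map_add_eq_mul]
    ring_nf
  calc ∑ u, weilSum ψ s (t₁ * u) * weilSum ψ s (t₂ * u)
      = ∑ x, ∑ y, ψ (x ^ s + y ^ s) * ∑ u, ψ (u * -(t₁ * x + t₂ * y)) := by
        simp_rw [h_prod, mul_sum]
        rw [sum_comm]
        exact sum_congr rfl fun x _ ↦ sum_comm
    _ = _ := by
        simp_rw [AddChar.sum_mulShift _ hψ, neg_eq_zero, mul_sum]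
        refine sum_congr rfl fun x _ ↦ sum_congr rfl fun y _ ↦ ?_
        split_ifs <;> ring

theorem sum_weilSum_mul_weilSum_eq_ite (hψ : ψ.IsPrimitive)
    (hs : Function.Injective (· ^ s : K → K)) {t₁ t₂ : K} (ht₂ : t₂ ≠ 0) :
    ∑ u, weilSum ψ s (t₁ * u) * weilSum ψ s (t₂ * u) =
      if t₁ = t₂ then (Fintype.card K : R) ^ 2 else 0 := by
  have h_line : ∀ x y, t₁ * x + t₂ * y = 0 ↔ y = -(t₁ / t₂ * x) := fun x y ↦ by
    constructor <;> intro h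
    · field_simp
      linear_combination h
    · rw [h]
      field_simp
      ring
  have h_val : ∀ x, x ^ s + (-(t₁ / t₂ * x)) ^ s = x ^ s * (1 - (t₁ / t₂) ^ s) := fun x ↦ by
    rw [neg_pow_of_pow_left_injective hs, mul_pow]
    ring
  have h_ratio : 1 - (t₁ / t₂) ^ s = 0 ↔ t₁ = t₂ := by
    rw [sub_eq_zero, eq_comm, ← one_pow s, hs.eq_iff, div_eq_one_iff_eq ht₂]
  simp_rw [sum_weilSum_mul_weilSum hψ, h_line, sum_ite_eq', mem_univ, if_true, h_val,
    AddChar.sum_pow_mul_eq_sum_mul hs, AddChar.sum_mulShift _ hψ, if_congr h_ratio rfl rfl]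
  split_ifs <;> ring

theorem sum_units_weilSum_mul_weilSum (hψ : ψ.IsPrimitive)
    (hs : Function.Injective (· ^ s : K → K)) {t₁ t₂ : K} (ht₂ : t₂ ≠ 0) :
    ∑ u : Kˣ, weilSum ψ s (t₁ * u) * weilSum ψ s (t₂ * u) =
      if t₁ = t₂ then (Fintype.card K : R) ^ 2 else 0 := by
  rw [Fintype.sum_units_eq_sum_sub (fun u ↦ weilSum ψ s (t₁ * u) * weilSum ψ s (t₂ * u)),
    mul_zero, weilSum_zero hψ.ne_one hs, zero_mul, sub_zero,
    sum_weilSum_mul_weilSum_eq_ite hψ hs ht₂]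

end WeilSum

theorem stmt_5_general (p n s : ℕ) (hp : p.Prime)
    (K : Type*) [Field K] [Fintype K] [DecidableEq K] [Algebra (ZMod p) K]
    (hcard : Fintype.card K = p ^ n)
    (hs : 0 < s) (hgcd : Nat.Coprime s (p ^ n - 1))
    (ζ : ℂ) (hζ : ζ = Complex.exp (2 * Real.pi * Complex.I / p))
    (ψ : K → ℂ) (hψ : ∀ x, ψ x = ζ ^ (Algebra.trace (ZMod p) K x).val)
    (W : K → ℂ) (hW : ∀ u, W u = ∑ x : K, ψ (x ^ s - u * x))
    (t₁ t₂ : K) (ht₂ : t₂ ≠ 0) :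
    ∑ u : Kˣ, W (t₁ * u) * W (t₂ * u) =
      if t₁ = t₂ then ((p : ℂ) ^ n) ^ 2 else 0 := by
  have : Fact p.Prime := ⟨hp⟩
  have hζ_prim : IsPrimitiveRoot ζ p := hζ ▸ Complex.isPrimitiveRoot_exp p hp.ne_zero
  have hW_eq : W = weilSum ((AddChar.zmodChar p hζ_prim.pow_eq_one).compAddMonoidHom
      (Algebra.trace (ZMod p) K).toAddMonoidHom) s := by
    funext u
    simp only [hW, hψ]
    rfl
  have h_inj : Function.Injective (· ^ s : K → K) :=
    pow_left_injective_of_coprime_card_units hs.ne' <| by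
      rwa [Nat.card_eq_fintype_card, Fintype.card_units, hcard, Nat.coprime_comm]
  rw [hW_eq, sum_units_weilSum_mul_weilSum
    (AddChar.isPrimitive_zmodChar_compAddMonoidHom_trace hζ_prim) h_inj ht₂, hcard, Nat.cast_pow]

/-- For `t₁, t₂ ∈ K^×`, `∑_{u ∈ K^×} W_{t₁ u} W_{t₂ u}` equals `q²` if `t₁ = t₂`
and `0` otherwise. -/
theorem stmt_5 (p n s : ℕ) (hp : p.Prime) (hn : 0 < n)
    (K : Type*) [Field K] [Fintype K] [DecidableEq K] [CharP K p] [Algebra (ZMod p) K]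
    (hcard : Fintype.card K = p ^ n)
    (hs : 0 < s) (hgcd : Nat.Coprime s (p ^ n - 1))
    (ζ : ℂ) (hζ : ζ = Complex.exp (2 * Real.pi * Complex.I / p))
    (ψ : K → ℂ) (hψ : ∀ x, ψ x = ζ ^ (Algebra.trace (ZMod p) K x).val)
    (W : K → ℂ) (hW : ∀ u, W u = ∑ x : K, ψ (x ^ s - u * x))
    (t₁ t₂ : K) (ht₁ : t₁ ≠ 0) (ht₂ : t₂ ≠ 0) :
    ∑ u : Kˣ, W (t₁ * u) * W (t₂ * u) =
      if t₁ = t₂ then ((p : ℂ) ^ n) ^ 2 else 0 :=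
  stmt_5_general p n s hp K hcard hs hgcd ζ hζ ψ hψ W hW t₁ t₂ ht₂
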